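/- arXiv:1907.01107 — 3 statements merged into one kernel-verified Lean document; each statement's English description precedes it below -/
import Mathlib

section
/- Let G_k(n) = (((1-i)/2) + (−1|n)·((1+i)/2)) · Σ_{a mod n} (a|n) e(ak/n) for odd n, where (·|n) is the Jacobi symbol and e(x) = exp(2πix). Then for coprime odd integers m and n, G_k(mn) = G_k(m) · G_k(n). -/
open Complex

/-- The Gauss-type sum
`G_k(n) = ((1-i)/2 + (−1|n)(1+i)/2) · Σ_{a mod n} (a|n) e(ak/n)` for odd `n`,
where `(·|n)` is the Jacobi symbol. -/
noncomputable def gaussG (k : ℤ) (n : ℕ) : ℂ :=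
  ((1 - I)/2 + (jacobiSym (-1) n : ℂ) * (1 + I)/2) *
    ∑ a ∈ Finset.range n,
      (jacobiSym (a : ℤ) n : ℂ) * Complex.exp (2 * Real.pi * I * a * k / n)

/-!
Writing the residues modulo `m * n` as `a * n + b * m` (Chinese remainder theorem), the summand
for `m * n` factors as `(n|m) (m|n)` times the product of the summands for `m` and `n`. By quadratic
reciprocity `(n|m) (m|n) = qrSign m n`, which is `-1` exactly when `m ≡ n ≡ 3 mod 4`; since the
prefactor is `1` for `n ≡ 1` and `-i` for `n ≡ 3 mod 4`, it absorbs this sign.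
-/

open Finset

lemma Nat.eq_of_mul_add_mul_modEq {m n a₁ a₂ b₁ b₂ : ℕ} (hmn : m.Coprime n)
    (ha₁ : a₁ < m) (ha₂ : a₂ < m) (h : a₁ * n + b₁ * m ≡ a₂ * n + b₂ * m [MOD m]) :
    a₁ = a₂ := by
  have h' : a₁ * n ≡ a₂ * n [MOD m] := by
    simpa only [Nat.ModEq, Nat.add_mul_mod_self_right] using h
  exact (Nat.ModEq.cancel_right_of_coprime hmn h').eq_of_lt_of_lt ha₁ ha₂

theorem Finset.sum_range_mul_eq_sum_sum_of_coprime {M : Type*} [AddCommMonoid M] {m n : ℕ}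
    (hmn : m.Coprime n) {f : ℕ → M} (hf : Function.Periodic f (m * n)) :
    ∑ c ∈ range (m * n), f c = ∑ a ∈ range m, ∑ b ∈ range n, f (a * n + b * m) := by
  set g : ℕ × ℕ → ℕ := fun p ↦ (p.1 * n + p.2 * m) % (m * n)
  have hinj : Set.InjOn g ↑(range m ×ˢ range n) := by
    rintro ⟨a₁, b₁⟩ h₁ ⟨a₂, b₂⟩ h₂ h
    simp only [coe_product, coe_range, Set.mem_prod, Set.mem_Iio] at h₁ h₂
    have hmod : a₁ * n + b₁ * m ≡ a₂ * n + b₂ * m [MOD m * n] := h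
    have hmod' : b₁ * m + a₁ * n ≡ b₂ * m + a₂ * n [MOD n] := by
      simpa only [add_comm] using hmod.of_mul_left m
    exact Prod.ext (Nat.eq_of_mul_add_mul_modEq hmn h₁.1 h₂.1 (hmod.of_mul_right n))
      (Nat.eq_of_mul_add_mul_modEq hmn.symm h₁.2 h₂.2 hmod')
  have himage : (range m ×ˢ range n).image g = range (m * n) := by
    refine eq_of_subset_of_card_le ?_
      (by simp only [card_image_of_injOn hinj, card_product, card_range, le_refl])
    simp only [subset_iff, mem_image, mem_product, mem_range]
    rintro _ ⟨p, ⟨ha, hb⟩, rfl⟩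
    exact Nat.mod_lt _ (Nat.mul_pos (by omega) (by omega))
  rw [← himage, sum_image hinj, sum_product]
  simp only [g, hf.map_mod_nat]

noncomputable def jacobiGaussTerm (k : ℤ) (n c : ℕ) : ℂ :=
  (jacobiSym (c : ℤ) n : ℂ) * exp (2 * Real.pi * I * c * k / n)

lemma jacobiGaussTerm_periodic (k : ℤ) (n : ℕ) :
    Function.Periodic (jacobiGaussTerm k n) n := by
  intro c
  rcases eq_or_ne n 0 with rfl | hn
  · simp
  have hJ : jacobiSym ((c + n : ℕ) : ℤ) n = jacobiSym c n :=
    jacobiSym.mod_left' (by push_cast; exact Int.add_emod_right _ _)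
  have hexp : 2 * Real.pi * I * (c + n : ℕ) * k / n =
      2 * Real.pi * I * c * k / n + k * (2 * Real.pi * I) := by
    push_cast; field_simp
  rw [jacobiGaussTerm, jacobiGaussTerm, hJ, hexp, exp_periodic.int_mul k]

lemma jacobiGaussTerm_mul_add_mul (k : ℤ) {m n : ℕ} (hm : m ≠ 0) (hn : n ≠ 0) (a b : ℕ) :
    jacobiGaussTerm k (m * n) (a * n + b * m) =
      (jacobiSym n m * jacobiSym m n : ℤ) * (jacobiGaussTerm k m a * jacobiGaussTerm k n b) := by
  have hJm : jacobiSym ((a * n + b * m : ℕ) : ℤ) m = jacobiSym a m * jacobiSym n m := by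
    rw [← jacobiSym.mul_left]
    exact jacobiSym.mod_left' (by push_cast; exact Int.add_mul_emod_self_right _ _ _)
  have hJn : jacobiSym ((a * n + b * m : ℕ) : ℤ) n = jacobiSym b n * jacobiSym m n := by
    rw [← jacobiSym.mul_left]
    exact jacobiSym.mod_left'
      (by push_cast; rw [add_comm]; exact Int.add_mul_emod_self_right _ _ _)
  have hexp : 2 * Real.pi * I * (a * n + b * m : ℕ) * k / (m * n : ℕ) =
      2 * Real.pi * I * a * k / m + 2 * Real.pi * I * b * k / n := by
    push_cast; field_simp
  rw [jacobiGaussTerm, jacobiGaussTerm, jacobiGaussTerm, jacobiSym.mul_right' _ hm hn, hJm, hJn,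
    hexp, exp_add]
  push_cast
  ring

noncomputable def jacobiGaussSum (k : ℤ) (n : ℕ) : ℂ :=
  ∑ a ∈ range n, jacobiGaussTerm k n a

lemma jacobiGaussSum_mul (k : ℤ) {m n : ℕ} (hm : m ≠ 0) (hn : n ≠ 0) (hmn : m.Coprime n) :
    jacobiGaussSum k (m * n) =
      (jacobiSym n m * jacobiSym m n : ℤ) * (jacobiGaussSum k m * jacobiGaussSum k n) := by
  simp only [jacobiGaussSum, sum_range_mul_eq_sum_sum_of_coprime hmn
    (jacobiGaussTerm_periodic k _), jacobiGaussTerm_mul_add_mul k hm hn, ← mul_sum, sum_mul_sum]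

lemma jacobiSym_mul_jacobiSym_eq_qrSign {m n : ℕ} (hm : Odd m) (hn : Odd n) (hmn : m.Coprime n) :
    jacobiSym n m * jacobiSym m n = qrSign m n := by
  rw [jacobiSym.quadratic_reciprocity' hn hm, mul_assoc, ← sq, jacobiSym.sq_one, mul_one]
  simpa [Int.gcd] using hmn

noncomputable def gaussEps (n : ℕ) : ℂ :=
  (1 - I)/2 + (jacobiSym (-1) n : ℂ) * (1 + I)/2

lemma gaussEps_of_mod_four_eq_one {n : ℕ} (h : n % 4 = 1) : gaussEps n = 1 := by
  rw [gaussEps, jacobiSym.at_neg_one (Nat.odd_iff.mpr (Nat.odd_of_mod_four_eq_one h)),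
    ZMod.χ₄_nat_one_mod_four h]
  push_cast; ring

lemma gaussEps_of_mod_four_eq_three {n : ℕ} (h : n % 4 = 3) : gaussEps n = -I := by
  rw [gaussEps, jacobiSym.at_neg_one (Nat.odd_iff.mpr (Nat.odd_of_mod_four_eq_three h)),
    ZMod.χ₄_nat_three_mod_four h]
  push_cast; ring

lemma gaussEps_mul_qrSign {m n : ℕ} (hm : Odd m) (hn : Odd n) :
    gaussEps (m * n) * qrSign m n = gaussEps m * gaussEps n := by
  have hmn : (m * n) % 4 = (m % 4) * (n % 4) % 4 := Nat.mul_mod _ _ _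
  rcases Nat.odd_mod_four_iff.mp (Nat.odd_iff.mp hm) with hm4 | hm4 <;>
    rcases Nat.odd_mod_four_iff.mp (Nat.odd_iff.mp hn) with hn4 | hn4 <;>
    simp only [qrSign, ZMod.χ₄_nat_one_mod_four, ZMod.χ₄_nat_three_mod_four, jacobiSym.one_left,
      jacobiSym.at_neg_one hn, gaussEps_of_mod_four_eq_one, gaussEps_of_mod_four_eq_three, hm4,
      hn4, hmn] <;>
    norm_num

/-- For coprime odd integers `m` and `n`, `G_k(mn) = G_k(m) G_k(n)`. -/
theorem gaussG_mul (k : ℤ) (m n : ℕ) (hm : Odd m) (hn : Odd n)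
    (hmn : Nat.Coprime m n) :
    gaussG k (m * n) = gaussG k m * gaussG k n := by
  calc gaussG k (m * n) = gaussEps (m * n) * jacobiGaussSum k (m * n) := rfl
    _ = gaussEps (m * n) * qrSign m n * (jacobiGaussSum k m * jacobiGaussSum k n) := by
      rw [jacobiGaussSum_mul k hm.pos.ne' hn.pos.ne' hmn,
        jacobiSym_mul_jacobiSym_eq_qrSign hm hn hmn, mul_assoc]
    _ = gaussG k m * gaussG k n := by
      rw [gaussEps_mul_qrSign hm hn]
      exact mul_mul_mul_comm _ _ _ _
end

section
/- For a prime p and complex α, β with Re(α), Re(β) > 1/2, the sum Σ_{r≥1} Σ_{n₁n₂ = p^{2r}} τ(n₁)τ(n₂) n₁^{−α} n₂^{−β} equals (1 + p^{−2α})(1 + p^{−2β}) / ((1 − p^{−2α})²(1 − p^{−2β})²) + 4 p^{−α−β} / ((1 − p^{−2α})²(1 − p^{−2β})²) − 1. -/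
/-!
Put `x = p^{-α}` and `y = p^{-β}`, so `‖x‖, ‖y‖ < 1`. Since `Σ τ(p^a) x^a = 1/(1-x)^2`, the sum
over all `r ≥ 0` of the inner sums is the even part of the Cauchy product
`F(x) F(y) = 1/((1-x)^2 (1-y)^2)`, that is `(F(x) F(y) + F(-x) F(-y)) / 2`. Over the common
denominator `(1-x^2)^2 (1-y^2)^2` its numerator is
`((1+x)^2(1+y)^2 + (1-x)^2(1-y)^2)/2 = (1+x^2)(1+y^2) + 4xy`; the term `r = 0` contributes `1`.
-/

open Complex Finset

theorem summable_norm_succ_mul_geometric_of_norm_lt_one {R : Type*} [NormedRing R] {r : R}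
    (hr : ‖r‖ < 1) : Summable fun n : ℕ ↦ ‖((n + 1 : ℕ) : R) * r ^ n‖ := by
  refine .of_nonneg_of_le (fun _ ↦ norm_nonneg _) (fun n ↦ ?_)
    ((summable_norm_pow_mul_geometric_of_norm_lt_one 1 hr).add
      (summable_norm_geometric_of_norm_lt_one hr))
  simpa [add_mul] using norm_add_le ((n : R) * r ^ n) (r ^ n)

theorem hasSum_succ_mul_geometric_of_norm_lt_one {𝕜 : Type*} [NormedField 𝕜] [CompleteSpace 𝕜]
    {r : 𝕜} (hr : ‖r‖ < 1) : HasSum (fun n : ℕ ↦ ((n + 1 : ℕ) : 𝕜) * r ^ n) (1 / (1 - r) ^ 2) := by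
  simpa using hasSum_choose_mul_geometric_of_norm_lt_one 1 hr

/-- With `x = p^{-α}`, `y = p^{-β}` this is the inner sum of the theorem for `p^n`, since
`τ(p^a) = a + 1`. -/
def tauConvolution {R : Type*} [Semiring R] (x y : R) (n : ℕ) : R :=
  ∑ a ∈ range (n + 1), ((a + 1 : ℕ) : R) * ((n - a + 1 : ℕ) : R) * (x ^ a * y ^ (n - a))

theorem tauConvolution_neg {R : Type*} [CommRing R] (x y : R) (n : ℕ) :
    tauConvolution (-x) (-y) n = (-1) ^ n * tauConvolution x y n := by
  rw [tauConvolution, tauConvolution, mul_sum]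
  refine sum_congr rfl fun a ha ↦ ?_
  have hsign : (-1 : R) ^ n = (-1) ^ a * (-1) ^ (n - a) := by
    rw [← pow_add, Nat.add_sub_cancel' (mem_range_succ_iff.mp ha)]
  rw [neg_pow x, neg_pow y, hsign]
  ring

theorem hasSum_tauConvolution {𝕜 : Type*} [NormedField 𝕜] [CompleteSpace 𝕜] {x y : 𝕜}
    (hx : ‖x‖ < 1) (hy : ‖y‖ < 1) :
    HasSum (tauConvolution x y) (1 / (1 - x) ^ 2 * (1 / (1 - y) ^ 2)) := by
  have h := hasSum_sum_range_mul_of_summable_norm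
    (summable_norm_succ_mul_geometric_of_norm_lt_one hx)
    (summable_norm_succ_mul_geometric_of_norm_lt_one hy)
  rw [(hasSum_succ_mul_geometric_of_norm_lt_one hx).tsum_eq,
    (hasSum_succ_mul_geometric_of_norm_lt_one hy).tsum_eq] at h
  convert h using 2 with n
  exact sum_congr rfl fun a _ ↦ by ring

theorem HasSum.comp_two_mul_of_hasSum_neg_one_pow_mul {R : Type*} [DivisionRing R]
    [TopologicalSpace R] [IsTopologicalRing R] [NeZero (2 : R)] {f : ℕ → R} {a b : R}
    (hf : HasSum f a) (hg : HasSum (fun n ↦ (-1) ^ n * f n) b) :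
    HasSum (fun k ↦ f (2 * k)) ((a + b) / 2) := by
  have hvanish : ∀ n ∉ Set.range (2 * ·), (f n + (-1) ^ n * f n) / 2 = 0 := by
    intro n hn
    have hodd : Odd n := Nat.not_even_iff_odd.mp fun ⟨k, hk⟩ ↦ hn ⟨k, by dsimp only; omega⟩
    simp [hodd.neg_one_pow]
  convert ((mul_right_injective₀ (two_ne_zero' ℕ)).hasSum_iff hvanish).mpr
    ((hf.add hg).div_const 2) using 1
  funext k
  simp [pow_mul]

theorem hasSum_tauConvolution_two_mul {𝕜 : Type*} [NormedField 𝕜] [CompleteSpace 𝕜]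
    [NeZero (2 : 𝕜)] {x y : 𝕜} (hx : ‖x‖ < 1) (hy : ‖y‖ < 1) :
    HasSum (fun r ↦ tauConvolution x y (2 * r))
      ((1 + x ^ 2) * (1 + y ^ 2) / ((1 - x ^ 2) ^ 2 * (1 - y ^ 2) ^ 2)
        + 4 * (x * y) / ((1 - x ^ 2) ^ 2 * (1 - y ^ 2) ^ 2)) := by
  have hneg := hasSum_tauConvolution (x := -x) (y := -y) (by rwa [norm_neg]) (by rwa [norm_neg])
  simp only [funext (tauConvolution_neg x y), sub_neg_eq_add] at hneg
  convert (hasSum_tauConvolution hx hy).comp_two_mul_of_hasSum_neg_one_pow_mul hneg using 1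
  have hunit {z : 𝕜} (hz : ‖z‖ < 1) : 1 - z ≠ 0 ∧ 1 + z ≠ 0 :=
    ⟨(isUnit_one_sub_of_norm_lt_one hz).ne_zero,
      by simpa using (isUnit_one_sub_of_norm_lt_one (x := -z) (by rwa [norm_neg])).ne_zero⟩
  obtain ⟨hx₁, hx₂⟩ := hunit hx
  obtain ⟨hy₁, hy₂⟩ := hunit hy
  rw [show 1 - x ^ 2 = (1 - x) * (1 + x) by ring, show 1 - y ^ 2 = (1 - y) * (1 + y) by ring]
  field_simp
  ring

theorem norm_natCast_cpow_neg_lt_one {n : ℕ} (hn : 1 < n) {s : ℂ} (hs : 0 < s.re) :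
    ‖(n : ℂ) ^ (-s)‖ < 1 := by
  rw [norm_natCast_cpow_of_pos (by omega)]
  exact Real.rpow_lt_one_of_one_lt_of_neg (by exact_mod_cast hn) (by simpa using hs)

theorem cpow_neg_natCast_mul_sub_natCast_mul {z : ℂ} (hz : z ≠ 0) (s t : ℂ) (a b : ℕ) :
    z ^ (-(a : ℂ) * s - (b : ℂ) * t) = (z ^ (-s)) ^ a * (z ^ (-t)) ^ b := by
  rw [show -(a : ℂ) * s - b * t = a * (-s) + b * (-t) by ring, cpow_add _ _ hz, cpow_nat_mul,
    cpow_nat_mul]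

/-- For a prime `p` and `Re α, Re β > 1/2`,
`Σ_{r≥1} Σ_{n₁n₂ = p^{2r}} τ(n₁)τ(n₂) n₁^{−α} n₂^{−β}
  = (1 + p^{−2α})(1 + p^{−2β})/((1 − p^{−2α})²(1 − p^{−2β})²)
    + 4 p^{−α−β}/((1 − p^{−2α})²(1 − p^{−2β})²) − 1`,
where the inner sum is `Σ_{a=0}^{2r} (a+1)(2r−a+1) p^{−aα − (2r−a)β}`. -/
theorem prime_power_divisor_sum (p : ℕ) (hp : p.Prime)
    (α β : ℂ) (hα : 1/2 < α.re) (hβ : 1/2 < β.re) :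
    (∑' r : ℕ, if 1 ≤ r then
        ∑ a ∈ Finset.range (2*r + 1),
          ((a + 1 : ℕ) : ℂ) * ((2*r - a + 1 : ℕ) : ℂ) *
            (p:ℂ)^(-(a:ℂ)*α - ((2*r - a : ℕ) : ℂ)*β)
      else 0)
    = (1 + (p:ℂ)^(-2*α)) * (1 + (p:ℂ)^(-2*β)) /
        ((1 - (p:ℂ)^(-2*α))^2 * (1 - (p:ℂ)^(-2*β))^2)
      + 4 * (p:ℂ)^(-α-β) / ((1 - (p:ℂ)^(-2*α))^2 * (1 - (p:ℂ)^(-2*β))^2)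
      - 1 := by
  have hp0 : (p : ℂ) ≠ 0 := Nat.cast_ne_zero.mpr hp.ne_zero
  have hsq (s : ℂ) : (p : ℂ) ^ (-2 * s) = ((p : ℂ) ^ (-s)) ^ 2 := by
    rw [← cpow_nat_mul]; ring_nf
  have hx := norm_natCast_cpow_neg_lt_one hp.one_lt (s := α) (by linarith)
  have hy := norm_natCast_cpow_neg_lt_one hp.one_lt (s := β) (by linarith)
  rw [hsq, hsq, sub_eq_add_neg (-α), cpow_add _ _ hp0]
  rw [← ((hasSum_tauConvolution_two_mul hx hy).sub (hasSum_ite_eq 0 1)).tsum_eq]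
  congr 1 with r
  rcases r with _ | r
  · simp [tauConvolution]
  · rw [if_pos (Nat.le_add_left 1 r), if_neg r.succ_ne_zero, sub_zero, tauConvolution]
    simp only [cpow_neg_natCast_mul_sub_natCast_mul hp0]
end

section
/- For a prime p and complex α, β, γ with Re(α), Re(β) > 0, Re(γ) > 1/2, Σ_{b=0}^∞ p^{−2bγ} Σ_{n₁,n₂≥0, n₁+n₂≤2b, n₁+n₂ even} τ(p^{n₁})τ(p^{n₂}) p^{−n₁α−n₂β} φ(p^{n₁+n₂})/p^{n₁+n₂} = (1 − p^{−2γ})^{−1} · [1/p + (1 − 1/p) · ((1 + p^{−2α−2γ})(1 + p^{−2β−2γ}) + 4p^{−α−β−2γ}) / ((1 − p^{−2α−2γ})²(1 − p^{−2β−2γ})²)]. -/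
open Complex Finset

/-!
Put `x = p^{-α}`, `y = p^{-β}`, `s = p^{-γ}` and `c = 1/p`, so that `φ(p^N)/p^N` is `1`
for `N = 0` and `1 - c` otherwise. The condition `n₁ + n₂ ≤ 2b` reads `⌈(n₁ + n₂)/2⌉ ≤ b`,
so after exchanging the two summations every even `(n₁, n₂)` collects the geometric tail
`Σ_{b ≥ (n₁+n₂)/2} s^{2b} = s^{n₁+n₂} / (1 - s²)`. What remains is the even part of
`Σ (n₁+1)(n₂+1) a^{n₁} b^{n₂} = (1-a)⁻²(1-b)⁻²` at `a = xs`, `b = ys`, i.e. the average of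
this sum and its value at `(-a, -b)`.
-/

theorem tsum_ite_le_pow {q : ℂ} (hq : ‖q‖ < 1) (m : ℕ) :
    ∑' b : ℕ, (if m ≤ b then q ^ b else 0) = q ^ m * (1 - q)⁻¹ := by
  have hsum : Summable fun b : ℕ => if m ≤ b then q ^ b else 0 :=
    .of_norm_bounded (summable_norm_geometric_of_norm_lt_one hq) fun b => by
      split_ifs <;> simp
  rw [← hsum.sum_add_tsum_nat_add m, sum_eq_zero fun b hb => if_neg (by simpa using hb),
    zero_add]
  simp_rw [if_pos (Nat.le_add_left m _), pow_add, tsum_mul_right,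
    tsum_geometric_of_norm_lt_one hq, mul_comm]

theorem tsum_pow_mul_tsum_ite_le {ι : Type*} {q : ℂ} (hq : ‖q‖ < 1) {f : ι → ℂ}
    (hf : Summable fun i => ‖f i‖) (d : ι → ℕ) :
    ∑' b : ℕ, q ^ b * ∑' i, (if d i ≤ b then f i else 0) =
      (1 - q)⁻¹ * ∑' i, q ^ d i * f i := by
  set F : ℕ → ι → ℂ := fun b i => (if d i ≤ b then q ^ b else 0) * f i
  have hF : Summable (Function.uncurry F) := by
    refine .of_norm_bounded ((summable_geometric_of_lt_one (norm_nonneg q) hq).mul_of_nonneg hf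
      (fun _ => by positivity) fun _ => norm_nonneg _) fun z => ?_
    simp only [Function.uncurry, F, norm_mul]
    gcongr
    split_ifs <;> simp
  calc ∑' b : ℕ, q ^ b * ∑' i, (if d i ≤ b then f i else 0)
      = ∑' b : ℕ, ∑' i, F b i := by
        refine tsum_congr fun b => ?_
        rw [← tsum_mul_left]
        exact tsum_congr fun i => by simp only [F, ite_mul, mul_ite, zero_mul, mul_zero]
    _ = ∑' i, ∑' b : ℕ, F b i := hF.tsum_comm.symm
    _ = (1 - q)⁻¹ * ∑' i, q ^ d i * f i := by
        simp only [F, tsum_mul_right, tsum_ite_le_pow hq, ← tsum_mul_left]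
        exact tsum_congr fun i => by ring

-- `τ(p^{n₁}) τ(p^{n₂}) a^{n₁} b^{n₂}`
def succMulPowProd (a b : ℂ) (n : ℕ × ℕ) : ℂ :=
  ((n.1 + 1 : ℕ) : ℂ) * ((n.2 + 1 : ℕ) : ℂ) * (a ^ n.1 * b ^ n.2)

theorem hasSum_succ_mul_pow {a : ℂ} (ha : ‖a‖ < 1) :
    HasSum (fun n : ℕ => ((n + 1 : ℕ) : ℂ) * a ^ n) ((1 - a) ^ 2)⁻¹ := by
  simpa using hasSum_choose_mul_geometric_of_norm_lt_one 1 ha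

theorem hasSum_succMulPowProd {a b : ℂ} (ha : ‖a‖ < 1) (hb : ‖b‖ < 1) :
    HasSum (succMulPowProd a b) ((1 - a) ^ 2 * (1 - b) ^ 2)⁻¹ := by
  have hA := hasSum_succ_mul_pow ha
  have hB := hasSum_succ_mul_pow hb
  have hprod : succMulPowProd a b =
      fun n => ((n.1 + 1 : ℕ) : ℂ) * a ^ n.1 * (((n.2 + 1 : ℕ) : ℂ) * b ^ n.2) :=
    funext fun n => by simp only [succMulPowProd]; ring
  rw [hprod, mul_inv]
  have hsum := summable_mul_of_summable_norm hA.summable.norm hB.summable.norm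
  have hAB := hA.mul hB hsum
  exact hAB

theorem hasSum_ite_even_succMulPowProd {a b : ℂ} (ha : ‖a‖ < 1) (hb : ‖b‖ < 1) :
    HasSum (fun n : ℕ × ℕ => if Even (n.1 + n.2) then succMulPowProd a b n else 0)
      (((1 + a ^ 2) * (1 + b ^ 2) + 4 * (a * b)) / ((1 - a ^ 2) ^ 2 * (1 - b ^ 2) ^ 2)) := by
  have h1a : 1 - a ≠ 0 := sub_ne_zero.mpr fun h => by simp [← h] at ha
  have h1b : 1 - b ≠ 0 := sub_ne_zero.mpr fun h => by simp [← h] at hb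
  have h2a : 1 + a ≠ 0 := fun h => by simp [eq_neg_of_add_eq_zero_right h] at ha
  have h2b : 1 + b ≠ 0 := fun h => by simp [eq_neg_of_add_eq_zero_right h] at hb
  have heven : (fun n : ℕ × ℕ => if Even (n.1 + n.2) then succMulPowProd a b n else 0) =
      fun n => (succMulPowProd a b n + succMulPowProd (-a) (-b) n) / 2 := by
    ext n
    have hsign : succMulPowProd (-a) (-b) n = (-1) ^ (n.1 + n.2) * succMulPowProd a b n := by
      simp only [succMulPowProd, neg_pow a, neg_pow b]; ring
    rcases Nat.even_or_odd (n.1 + n.2) with h | h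
    · rw [if_pos h, hsign, h.neg_one_pow]; ring
    · rw [if_neg (Nat.not_even_iff_odd.mpr h), hsign, h.neg_one_pow]; ring
  have hval : ((1 + a ^ 2) * (1 + b ^ 2) + 4 * (a * b)) / ((1 - a ^ 2) ^ 2 * (1 - b ^ 2) ^ 2) =
      (((1 - a) ^ 2 * (1 - b) ^ 2)⁻¹ + ((1 - -a) ^ 2 * (1 - -b) ^ 2)⁻¹) / 2 := by
    rw [sub_neg_eq_add, sub_neg_eq_add, show 1 - a ^ 2 = (1 - a) * (1 + a) by ring,
      show 1 - b ^ 2 = (1 - b) * (1 + b) by ring]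
    field_simp
    ring
  rw [heven, hval]
  exact ((hasSum_succMulPowProd ha hb).add (hasSum_succMulPowProd (a := -a) (b := -b)
    (by rwa [norm_neg]) (by rwa [norm_neg]))).div_const 2

theorem hasSum_ite_even_succMulPowProd_mul {a b : ℂ} (ha : ‖a‖ < 1) (hb : ‖b‖ < 1) (c : ℂ) :
    HasSum (fun n : ℕ × ℕ =>
        if Even (n.1 + n.2) then succMulPowProd a b n * (if n.1 + n.2 = 0 then 1 else 1 - c)
        else 0)
      (c + (1 - c) * (((1 + a ^ 2) * (1 + b ^ 2) + 4 * (a * b)) /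
        ((1 - a ^ 2) ^ 2 * (1 - b ^ 2) ^ 2))) := by
  have hsplit : ∀ n : ℕ × ℕ,
      (if Even (n.1 + n.2) then succMulPowProd a b n * (if n.1 + n.2 = 0 then 1 else 1 - c)
        else 0) =
      (1 - c) * (if Even (n.1 + n.2) then succMulPowProd a b n else 0) +
        if n = 0 then c else 0 := by
    rintro ⟨n₁, n₂⟩
    by_cases h0 : (n₁, n₂) = 0
    · simp_all [succMulPowProd]
    · have hN : n₁ + n₂ ≠ 0 := fun h => h0 (by simp_all)
      split_ifs <;> ring
  rw [funext hsplit, add_comm c]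
  exact ((hasSum_ite_even_succMulPowProd ha hb).mul_left (1 - c)).add
    (hasSum_ite_eq (0 : ℕ × ℕ) c)

theorem tsum_sq_pow_mul_sum_even_succMulPowProd {x y s : ℂ} (hx : ‖x‖ < 1) (hy : ‖y‖ < 1)
    (hs : ‖s‖ < 1) (c : ℂ) :
    ∑' b : ℕ, (s ^ 2) ^ b *
      ∑ n₁ ∈ range (2 * b + 1), ∑ n₂ ∈ range (2 * b + 1),
        (if n₁ + n₂ ≤ 2 * b ∧ Even (n₁ + n₂) then
          succMulPowProd x y (n₁, n₂) * (if n₁ + n₂ = 0 then 1 else 1 - c) else 0) =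
      (1 - s ^ 2)⁻¹ * (c + (1 - c) *
        (((1 + (x * s) ^ 2) * (1 + (y * s) ^ 2) + 4 * (x * s * (y * s))) /
          ((1 - (x * s) ^ 2) ^ 2 * (1 - (y * s) ^ 2) ^ 2))) := by
  set f : ℕ × ℕ → ℂ := fun n =>
    if Even (n.1 + n.2) then succMulPowProd x y n * (if n.1 + n.2 = 0 then 1 else 1 - c) else 0
  have hinner : ∀ b : ℕ,
      ∑ n₁ ∈ range (2 * b + 1), ∑ n₂ ∈ range (2 * b + 1),
        (if n₁ + n₂ ≤ 2 * b ∧ Even (n₁ + n₂) then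
          succMulPowProd x y (n₁, n₂) * (if n₁ + n₂ = 0 then 1 else 1 - c) else 0) =
      ∑' n : ℕ × ℕ, if (n.1 + n.2 + 1) / 2 ≤ b then f n else 0 := by
    intro b
    rw [tsum_eq_sum (s := range (2 * b + 1) ×ˢ range (2 * b + 1)), sum_product]
    · refine sum_congr rfl fun n₁ _ => sum_congr rfl fun n₂ _ => ?_
      simp only [f]
      by_cases hle : n₁ + n₂ ≤ 2 * b
      · rw [if_pos (by omega : (n₁ + n₂ + 1) / 2 ≤ b)]
        simp only [hle, true_and]
      · rw [if_neg (by omega : ¬(n₁ + n₂ + 1) / 2 ≤ b), if_neg (by tauto)]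
    · rintro ⟨n₁, n₂⟩ hn
      rw [if_neg]
      intro hle
      exact hn (mem_product.mpr ⟨mem_range.mpr (by omega), mem_range.mpr (by omega)⟩)
  have hs2 : ‖s ^ 2‖ < 1 := by rw [norm_pow]; exact pow_lt_one₀ (norm_nonneg s) hs two_ne_zero
  have hweight : ∀ n : ℕ × ℕ, (s ^ 2) ^ ((n.1 + n.2 + 1) / 2) * f n =
      if Even (n.1 + n.2) then
        succMulPowProd (x * s) (y * s) n * (if n.1 + n.2 = 0 then 1 else 1 - c) else 0 := by
    rintro ⟨n₁, n₂⟩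
    by_cases h : Even (n₁ + n₂)
    · simp only [f, if_pos h]
      obtain ⟨k, hk⟩ := h
      rw [show (n₁ + n₂ + 1) / 2 = k by omega, ← pow_mul, show 2 * k = n₁ + n₂ by omega]
      simp only [succMulPowProd]
      ring
    · simp only [f, if_neg h, mul_zero]
  have hxs : ‖x * s‖ < 1 := by
    rw [norm_mul]; exact mul_lt_one_of_nonneg_of_lt_one_left (norm_nonneg x) hx hs.le
  have hys : ‖y * s‖ < 1 := by
    rw [norm_mul]; exact mul_lt_one_of_nonneg_of_lt_one_left (norm_nonneg y) hy hs.le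
  simp only [hinner]
  rw [tsum_pow_mul_tsum_ite_le hs2 (hasSum_ite_even_succMulPowProd_mul hx hy c).summable.norm,
    tsum_congr hweight, (hasSum_ite_even_succMulPowProd_mul hxs hys c).tsum_eq]

theorem natCast_totient_prime_pow_div {p : ℕ} (hp : p.Prime) (N : ℕ) :
    ((p ^ N).totient : ℂ) / (p : ℂ) ^ N = if N = 0 then 1 else 1 - 1 / (p : ℂ) := by
  have hp0 : (p : ℂ) ≠ 0 := by exact_mod_cast hp.ne_zero
  rcases N with _ | N
  · simp
  · rw [if_neg N.succ_ne_zero, Nat.totient_prime_pow_succ hp]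
    push_cast [Nat.cast_sub hp.one_le]
    field_simp
    ring

theorem norm_natCast_cpow_neg_lt_one_s13 {p : ℕ} (hp : 1 < p) {z : ℂ} (hz : 0 < z.re) :
    ‖(p : ℂ) ^ (-z)‖ < 1 := by
  rw [norm_natCast_cpow_of_pos (by omega)]
  exact Real.rpow_lt_one_of_one_lt_of_neg (by exact_mod_cast hp) (by simpa using hz)

/-- For a prime `p`, `Re α, Re β > 0`, `Re γ > 1/2`:
`Σ_{b≥0} p^{−2bγ} Σ_{n₁,n₂≥0, n₁+n₂≤2b even} τ(p^{n₁})τ(p^{n₂}) p^{−n₁α−n₂β} φ(p^{n₁+n₂})/p^{n₁+n₂}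
  = (1 − p^{−2γ})⁻¹ [1/p + (1 − 1/p)((1 + p^{−2α−2γ})(1 + p^{−2β−2γ}) + 4p^{−α−β−2γ})
      / ((1 − p^{−2α−2γ})²(1 − p^{−2β−2γ})²)]`. -/
theorem even_power_gauss_sum_series (p : ℕ) (hp : p.Prime)
    (α β γ : ℂ) (hα : 0 < α.re) (hβ : 0 < β.re) (hγ : 1/2 < γ.re) :
    (∑' b : ℕ, (p:ℂ)^(-2*(b:ℂ)*γ) *
      ∑ n1 ∈ Finset.range (2*b + 1), ∑ n2 ∈ Finset.range (2*b + 1),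
        (if n1 + n2 ≤ 2*b ∧ Even (n1 + n2) then
          ((n1 + 1 : ℕ) : ℂ) * ((n2 + 1 : ℕ) : ℂ) * (p:ℂ)^(-(n1:ℂ)*α - (n2:ℂ)*β) *
            (((p^(n1+n2)).totient : ℂ) / ((p:ℂ)^((n1+n2 : ℕ) : ℂ)))
        else 0))
    = (1 - (p:ℂ)^(-2*γ))⁻¹ *
        (1/(p:ℂ) + (1 - 1/(p:ℂ)) *
          ((1 + (p:ℂ)^(-2*α-2*γ)) * (1 + (p:ℂ)^(-2*β-2*γ)) + 4*(p:ℂ)^(-α-β-2*γ)) /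
            ((1 - (p:ℂ)^(-2*α-2*γ))^2 * (1 - (p:ℂ)^(-2*β-2*γ))^2)) := by
  have hp0 : (p : ℂ) ≠ 0 := by exact_mod_cast hp.ne_zero
  have hx := norm_natCast_cpow_neg_lt_one_s13 hp.one_lt hα
  have hy := norm_natCast_cpow_neg_lt_one_s13 hp.one_lt hβ
  have hs := norm_natCast_cpow_neg_lt_one_s13 hp.one_lt (by linarith : 0 < γ.re)
  have key := tsum_sq_pow_mul_sum_even_succMulPowProd hx hy hs (1 / (p : ℂ))
  simp only [← cpow_nat_mul, ← cpow_add _ _ hp0] at key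
  rw [show -2 * α - 2 * γ = ((2 : ℕ) : ℂ) * (-α + -γ) by push_cast; ring,
    show -2 * β - 2 * γ = ((2 : ℕ) : ℂ) * (-β + -γ) by push_cast; ring,
    show -α - β - 2 * γ = -α + -γ + (-β + -γ) by ring,
    show -2 * γ = ((2 : ℕ) : ℂ) * -γ by push_cast; ring, mul_div_assoc, ← key]
  refine tsum_congr fun b => ?_
  rw [show -2 * (b : ℂ) * γ = b * ((2 : ℕ) * -γ) by push_cast; ring]
  congr 1
  refine sum_congr rfl fun n₁ _ => sum_congr rfl fun n₂ _ => ?_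
  rw [cpow_natCast, natCast_totient_prime_pow_div hp,
    show -(n₁ : ℂ) * α - n₂ * β = n₁ * -α + n₂ * -β by ring, cpow_add _ _ hp0, cpow_nat_mul,
    cpow_nat_mul]
  rfl
end
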